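/- A cube of Ω_n is critical (i.e., belongs to neither M↓ := M₁↓ ∪ M₂↓ nor M↑ := M₁↑ ∪ M₂↑) if and only if it belongs to C₁ ∪ C₂ ∪ C₃. -/
import Mathlib


/-- A (potential) cube of the cubical complex `Ω_n`: an ordered 4-tuple of finite
subsets of `ℕ`. -/
structure Cube where
  A : Finset ℕ
  B : Finset ℕ
  C : Finset ℕ
  D : Finset ℕ
deriving DecidableEq

/-- `σ` is a cube of `Ω_n`: the four parts are pairwise disjoint, their union is
`[n] = {1,…,n}`, and `A`, `C` are nonempty. -/
def IsCube (n : ℕ) (σ : Cube) : Prop :=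
  Disjoint σ.A σ.B ∧ Disjoint σ.A σ.C ∧ Disjoint σ.A σ.D ∧
  Disjoint σ.B σ.C ∧ Disjoint σ.B σ.D ∧ Disjoint σ.C σ.D ∧
  σ.A ∪ σ.B ∪ σ.C ∪ σ.D = Finset.Icc 1 n ∧
  σ.A.Nonempty ∧ σ.C.Nonempty

/-- The dimension of a cube, `|B| + |D|`. -/
def Cube.dim (σ : Cube) : ℕ := σ.B.card + σ.D.card

/-- The pivot `α(σ) = min (A ∪ B)`. -/
noncomputable def Cube.alpha (σ : Cube) : ℕ := sInf (↑(σ.A ∪ σ.B) : Set ℕ)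

/-- The pivot `β(σ) = max (B ∪ C)`. -/
noncomputable def Cube.beta (σ : Cube) : ℕ := sSup (↑(σ.B ∪ σ.C) : Set ℕ)

def M1up (σ : Cube) : Prop := σ.alpha ∈ σ.B
def M1down (σ : Cube) : Prop := σ.alpha ∈ σ.A ∧ 2 ≤ σ.A.card
def M2up (σ : Cube) : Prop := σ.A = {σ.alpha} ∧ σ.beta ∈ σ.B
def M2down (σ : Cube) : Prop :=
  σ.A = {σ.alpha} ∧ σ.beta ∈ σ.C ∧ 2 ≤ σ.C.card ∧ σ.alpha < σ.beta
def Mdown (σ : Cube) : Prop := M1down σ ∨ M2down σ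
def Mup (σ : Cube) : Prop := M1up σ ∨ M2up σ
def Critical (σ : Cube) : Prop := ¬ Mdown σ ∧ ¬ Mup σ

/-- The covering relation: `τ` is obtained from `σ` by moving exactly one element
of `B(σ) ∪ D(σ)` into `A(σ)` or into `C(σ)`. -/
def Covers (σ τ : Cube) : Prop :=
  (∃ x ∈ σ.B, τ = ⟨insert x σ.A, σ.B.erase x, σ.C, σ.D⟩) ∨
  (∃ x ∈ σ.B, τ = ⟨σ.A, σ.B.erase x, insert x σ.C, σ.D⟩) ∨
  (∃ x ∈ σ.D, τ = ⟨insert x σ.A, σ.B, σ.C, σ.D.erase x⟩) ∨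
  (∃ x ∈ σ.D, τ = ⟨σ.A, σ.B, insert x σ.C, σ.D.erase x⟩)

open Classical in
/-- The matching `μ₊ : M↓ → M↑`. -/
noncomputable def muPlus (σ : Cube) : Cube :=
  if M1down σ then ⟨σ.A.erase σ.alpha, insert σ.alpha σ.B, σ.C, σ.D⟩
  else ⟨σ.A, insert σ.beta σ.B, σ.C.erase σ.beta, σ.D⟩

/-- The first family of critical cubes: `A = {α}`, `B = ∅`, `|C| ≥ 2`, `β < α`. -/
noncomputable def C1 (σ : Cube) : Prop :=
  σ.A = {σ.alpha} ∧ σ.B = ∅ ∧ 2 ≤ σ.C.card ∧ σ.beta < σ.alpha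

/-- The second family of critical cubes: `A = {α}`, `B = ∅`, `C = {β}`. -/
noncomputable def C2 (σ : Cube) : Prop :=
  σ.A = {σ.alpha} ∧ σ.B = ∅ ∧ σ.C = {σ.beta}

/-- The third family of critical cubes: `A = {α}`, `C = {β}`, `B ≠ ∅`,
and `α < b < β` for every `b ∈ B`. -/
noncomputable def C3 (σ : Cube) : Prop :=
  σ.A = {σ.alpha} ∧ σ.C = {σ.beta} ∧ σ.B.Nonempty ∧
  ∀ b ∈ σ.B, σ.alpha < b ∧ b < σ.beta

lemma alpha_mem (σ : Cube) (h : σ.A.Nonempty) : σ.alpha ∈ σ.A ∪ σ.B := by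
  have : ((↑(σ.A ∪ σ.B) : Set ℕ)).Nonempty := by
    simp only [Finset.coe_nonempty]
    exact h.mono Finset.subset_union_left
  exact Finset.mem_coe.1 (Nat.sInf_mem this)

lemma alpha_le (σ : Cube) {x : ℕ} (hx : x ∈ σ.A ∪ σ.B) : σ.alpha ≤ x :=
  Nat.sInf_le (by simpa using hx)

lemma beta_mem (σ : Cube) (h : σ.C.Nonempty) : σ.beta ∈ σ.B ∪ σ.C := by
  have hne : ((↑(σ.B ∪ σ.C) : Set ℕ)).Nonempty := by
    simp only [Finset.coe_nonempty]
    exact h.mono Finset.subset_union_right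
  exact Finset.mem_coe.1 (Set.Nonempty.csSup_mem hne (Finset.finite_toSet _))

lemma le_beta (σ : Cube) {x : ℕ} (hx : x ∈ σ.B ∪ σ.C) : x ≤ σ.beta :=
  le_csSup (Finset.bddAbove _) (by simpa using hx)

/-- A cube of `Ω_n` is critical if and only if it belongs to `C₁ ∪ C₂ ∪ C₃`. -/
theorem critical_iff (n : ℕ) (hn : 2 ≤ n) (σ : Cube) (hσ : IsCube n σ) :
    Critical σ ↔ C1 σ ∨ C2 σ ∨ C3 σ := by
  obtain ⟨hAB, hAC, hAD, hBC, hBD, hCD, hUn, hA, hC⟩ := hσ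
  constructor
  · rintro ⟨hd, hu⟩
    rw [Mdown] at hd; rw [Mup] at hu
    push_neg at hd hu
    obtain ⟨hd1, hd2⟩ := hd
    obtain ⟨hu1, hu2⟩ := hu
    -- alpha ∈ A
    have haA : σ.alpha ∈ σ.A := by
      rcases Finset.mem_union.1 (alpha_mem σ hA) with h | h
      · exact h
      · exact absurd h hu1
    -- A = {alpha}
    have hAeq : σ.A = {σ.alpha} := by
      by_contra h
      have hc2 : 2 ≤ σ.A.card := by
        rcases Nat.lt_or_ge σ.A.card 2 with hlt | hge
        · exfalso
          have h1 : σ.A.card = 1 := by have := Finset.card_pos.2 hA; omega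
          obtain ⟨a, ha⟩ := Finset.card_eq_one.1 h1
          rw [ha] at haA; simp at haA
          exact h (by rw [ha, haA])
        · exact hge
      exact hd1 ⟨haA, hc2⟩
    -- beta ∈ C
    have hbC : σ.beta ∈ σ.C := by
      rcases Finset.mem_union.1 (beta_mem σ hC) with h | h
      · exact absurd h (fun hb => hu2 ⟨hAeq, hb⟩)
      · exact h
    have hab : σ.beta ≠ σ.alpha := fun h =>
      (Finset.disjoint_left.1 hAC) haA (h ▸ hbC)
    by_cases hC2 : 2 ≤ σ.C.card
    · -- then ¬ alpha < beta, so beta < alpha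
      have hba : σ.beta < σ.alpha := by
        rcases lt_or_ge σ.beta σ.alpha with h | h
        · exact h
        · exact absurd ⟨hAeq, hbC, hC2, lt_of_le_of_ne h (Ne.symm hab)⟩ hd2
      left
      refine ⟨hAeq, ?_, hC2, hba⟩
      by_contra hB
      obtain ⟨b, hb⟩ := Finset.nonempty_iff_ne_empty.2 hB
      have h1 : σ.alpha ≤ b := alpha_le σ (Finset.mem_union_right _ hb)
      have h2 : b ≤ σ.beta := le_beta σ (Finset.mem_union_left _ hb)
      have : b ≠ σ.alpha := fun h => (Finset.disjoint_left.1 hAB) haA (h ▸ hb)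
      omega
    · -- C = {beta}
      have hCeq : σ.C = {σ.beta} := by
        have h1 : σ.C.card = 1 := by
          have := Finset.card_pos.2 hC; omega
        obtain ⟨c, hc⟩ := Finset.card_eq_one.1 h1
        rw [hc] at hbC ⊢
        simp at hbC; rw [hbC]
      rcases Finset.eq_empty_or_nonempty σ.B with hB | hB
      · exact Or.inr (Or.inl ⟨hAeq, hB, hCeq⟩)
      · refine Or.inr (Or.inr ⟨hAeq, hCeq, hB, fun b hb => ?_⟩)
        have h1 : σ.alpha ≤ b := alpha_le σ (Finset.mem_union_right _ hb)
        have h2 : b ≤ σ.beta := le_beta σ (Finset.mem_union_left _ hb)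
        have h3 : b ≠ σ.alpha := fun h => (Finset.disjoint_left.1 hAB) haA (h ▸ hb)
        have h4 : b ≠ σ.beta := fun h =>
          (Finset.disjoint_left.1 hBC) hb (h ▸ hbC)
        omega
  · rintro (⟨h1, h2, h3, h4⟩ | ⟨h1, h2, h3⟩ | ⟨h1, h2, h3, h4⟩)
    · refine ⟨?_, ?_⟩
      · rintro (⟨_, hcard⟩ | ⟨_, _, _, hlt⟩)
        · rw [h1] at hcard; simp at hcard
        · omega
      · rintro (h | ⟨_, h⟩)
        · unfold M1up at h; rw [h2] at h; simp at h
        · rw [h2] at h; simp at h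
    · refine ⟨?_, ?_⟩
      · rintro (⟨_, hcard⟩ | ⟨_, _, hcard, _⟩) <;>
          first
          | (rw [h1] at hcard; simp at hcard)
          | (rw [h3] at hcard; simp at hcard)
      · rintro (h | ⟨_, h⟩)
        · unfold M1up at h; rw [h2] at h; simp at h
        · rw [h2] at h; simp at h
    · have haA : σ.alpha ∈ σ.A := h1 ▸ Finset.mem_singleton_self _
      refine ⟨?_, ?_⟩
      · rintro (⟨_, hcard⟩ | ⟨_, _, hcard, _⟩) <;>
          first
          | (rw [h1] at hcard; simp at hcard)
          | (rw [h2] at hcard; simp at hcard)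
      · rintro (h | ⟨_, h⟩)
        · exact (Finset.disjoint_left.1 hAB) haA h
        · exact absurd (h4 _ h).2 (lt_irrefl _)
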